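/- arXiv:1407.0785 — 6 statements merged into one kernel-verified Lean document; each statement's English description precedes it below -/
import Mathlib

section
/- For integers $m \geq 1$ and $k \geq 0$, define $H_{m,k}(t) = \frac{1}{2^m (m+2k)!} \left(\frac{d}{dt}\right)^{m+2k}\left[(t^2-1)^m (t-1)^{2k}\right]$. Then for all real $i, j > 0$: $\int_0^\infty p_m(4\pi j y) e^{-4\pi (i+j) y} y^{m+2k}\,dy = \frac{(m+2k)!}{(4\pi(i+j))^{m+2k+1}} H_{m,k}\left(\frac{i-j}{i+j}\right)$, where $p_m(x) = \sum_{a=0}^m \binom{m}{a} \frac{(-x)^a}{a!}$. -/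
open Real MeasureTheory

/-- The polynomial `p_m(x) = ∑_{a=0}^m binom(m,a) (-x)^a / a!`. -/
noncomputable def pPoly (m : ℕ) (x : ℝ) : ℝ :=
  ∑ a ∈ Finset.range (m + 1), (m.choose a : ℝ) * (-x) ^ a / (a.factorial : ℝ)

/-- `H_{m,k}(t) = 1/(2^m (m+2k)!) · (d/dt)^{m+2k} [(t²-1)^m (t-1)^{2k}]`. -/
noncomputable def Hpoly (m k : ℕ) (t : ℝ) : ℝ :=
  (1 / (2 ^ m * ((m + 2 * k).factorial : ℝ))) *
    iteratedDeriv (m + 2 * k) (fun s : ℝ => (s ^ 2 - 1) ^ m * (s - 1) ^ (2 * k)) t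

/-!
Writing `t² - 1 = (t - 1)((t - 1) + 2)` and expanding binomially, the polynomial under the
derivative is `∑ₐ C(m,a) 2^(m-a) (t - 1)^(N+a)` with `N = m + 2k`, so
`H_{m,k}(t) = ∑ₐ C(m,a) (N+a)! / (N! a!) ((t - 1)/2)^a`.
On the other side, expanding `p_m` and integrating termwise with `∫₀^∞ yⁿ e^(-cy) dy = n!/cⁿ⁺¹`
gives the same sum at `(t - 1)/2 = -b/c`, i.e. at `t = 1 - 2b/c`; for `b = 4πj`, `c = 4π(i+j)`
this is `t = (i - j)/(i + j)`.
-/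

open Finset

lemma integral_pow_mul_exp_neg_mul_Ioi (n : ℕ) {c : ℝ} (hc : 0 < c) :
    ∫ y in Set.Ioi (0 : ℝ), y ^ n * exp (-(c * y)) = n.factorial / c ^ (n + 1) := by
  have h := integral_rpow_mul_exp_neg_mul_Ioi (a := n + 1) (by positivity) hc
  simp_rw [add_sub_cancel_right, rpow_natCast, Gamma_nat_eq_factorial, one_div, inv_rpow hc.le,
    ← rpow_natCast] at h
  norm_cast at h
  rw [h, div_eq_inv_mul]

lemma integrableOn_pow_mul_exp_neg_mul_Ioi (n : ℕ) {c : ℝ} (hc : 0 < c) :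
    IntegrableOn (fun y : ℝ => y ^ n * exp (-(c * y))) (Set.Ioi 0) :=
  .of_integral_ne_zero (by rw [integral_pow_mul_exp_neg_mul_Ioi n hc]; positivity)

lemma iteratedDeriv_sub_const_pow {𝕜 : Type*} [NontriviallyNormedField 𝕜] (n p : ℕ) (s : 𝕜) :
    iteratedDeriv n (fun x => (x - s) ^ p) = fun x => p.descFactorial n * (x - s) ^ (p - n) := by
  rw [iteratedDeriv_comp_sub_const n (· ^ p)]
  simp

lemma sq_sub_one_pow_mul_sub_one_pow (m k : ℕ) (x : ℝ) :
    (x ^ 2 - 1) ^ m * (x - 1) ^ (2 * k)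
      = ∑ a ∈ range (m + 1), (m.choose a * 2 ^ (m - a) : ℝ) * (x - 1) ^ (m + 2 * k + a) := by
  rw [show x ^ 2 - 1 = (x - 1) * ((x - 1) + 2) by ring, mul_pow, add_pow, mul_sum, sum_mul]
  refine sum_congr rfl fun a _ => ?_
  ring

lemma Hpoly_eq_sum (m k : ℕ) (t : ℝ) :
    Hpoly m k t = ∑ a ∈ range (m + 1),
      m.choose a * (m + 2 * k + a).factorial / ((m + 2 * k).factorial * a.factorial)
        * ((t - 1) / 2) ^ a := by
  have hdiff : ∀ a ∈ range (m + 1), ContDiffAt ℝ (m + 2 * k)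
      (fun x : ℝ => (m.choose a * 2 ^ (m - a) : ℝ) * (x - 1) ^ (m + 2 * k + a)) t :=
    fun a _ => by fun_prop
  simp_rw [Hpoly, sq_sub_one_pow_mul_sub_one_pow, iteratedDeriv_fun_sum hdiff,
    iteratedDeriv_const_mul_field, iteratedDeriv_sub_const_pow, mul_sum]
  refine sum_congr rfl fun a ha => ?_
  have ham : a ≤ m := Nat.lt_succ_iff.mp (mem_range.mp ha)
  have hfact := Nat.factorial_mul_descFactorial (Nat.le_add_right (m + 2 * k) a)
  rw [Nat.add_sub_cancel_left] at hfact ⊢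
  have h2 : (2 : ℝ) ^ m = 2 ^ (m - a) * 2 ^ a := by rw [← pow_add, Nat.sub_add_cancel ham]
  rw [← hfact, h2, div_pow]
  push_cast
  field_simp

lemma integral_pPoly_mul_exp_neg_mul_mul_pow (m n : ℕ) (b : ℝ) {c : ℝ} (hc : 0 < c) :
    ∫ y in Set.Ioi (0 : ℝ), pPoly m (b * y) * exp (-(c * y)) * y ^ n
      = ∑ a ∈ range (m + 1),
          m.choose a * (-b) ^ a / a.factorial * ((n + a).factorial / c ^ (n + a + 1)) := by
  have hexpand : ∀ y : ℝ, pPoly m (b * y) * exp (-(c * y)) * y ^ n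
      = ∑ a ∈ range (m + 1),
          m.choose a * (-b) ^ a / a.factorial * (y ^ (n + a) * exp (-(c * y))) := by
    intro y
    simp_rw [pPoly, sum_mul]
    refine sum_congr rfl fun a _ => ?_
    rw [neg_mul_eq_neg_mul, mul_pow, pow_add]
    ring
  simp_rw [hexpand]
  rw [integral_finsetSum _ fun a _ => (integrableOn_pow_mul_exp_neg_mul_Ioi (n + a) hc).const_mul _]
  simp_rw [integral_const_mul, integral_pow_mul_exp_neg_mul_Ioi _ hc]

lemma integral_pPoly_mul_exp_neg_mul_mul_pow_eq_Hpoly (m k : ℕ) (b : ℝ) {c : ℝ} (hc : 0 < c) :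
    ∫ y in Set.Ioi (0 : ℝ), pPoly m (b * y) * exp (-(c * y)) * y ^ (m + 2 * k)
      = (m + 2 * k).factorial / c ^ (m + 2 * k + 1) * Hpoly m k (1 - 2 * b / c) := by
  rw [integral_pPoly_mul_exp_neg_mul_mul_pow _ _ _ hc, Hpoly_eq_sum, mul_sum]
  refine sum_congr rfl fun a _ => ?_
  rw [show (1 - 2 * b / c - 1) / 2 = -b / c by ring, div_pow, add_right_comm _ a 1, pow_add c _ a]
  field_simp

theorem stmt0_general (m k : ℕ) (i j : ℝ) (hi : 0 < i) (hj : 0 < j) :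
    ∫ y in Set.Ioi (0 : ℝ),
        pPoly m (4 * π * j * y) * Real.exp (-(4 * π * (i + j) * y)) * y ^ (m + 2 * k)
      = ((m + 2 * k).factorial : ℝ) / (4 * π * (i + j)) ^ (m + 2 * k + 1)
          * Hpoly m k ((i - j) / (i + j)) := by
  have hc : 0 < 4 * π * (i + j) := by positivity
  rw [integral_pPoly_mul_exp_neg_mul_mul_pow_eq_Hpoly m k _ hc]
  congr 2
  field_simp
  ring

theorem stmt0 (m k : ℕ) (hm : 1 ≤ m) (i j : ℝ) (hi : 0 < i) (hj : 0 < j) :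
    ∫ y in Set.Ioi (0 : ℝ),
        pPoly m (4 * π * j * y) * Real.exp (-(4 * π * (i + j) * y)) * y ^ (m + 2 * k)
      = ((m + 2 * k).factorial : ℝ) / (4 * π * (i + j)) ^ (m + 2 * k + 1)
          * Hpoly m k ((i - j) / (i + j)) :=
  stmt0_general m k i j hi hj
end

section
/- Define $G_{m,k}(t) = \sum_{a=0}^m (-1)^a \frac{(m+2k+a)!}{(a!)^2 (m-a)!} t^a$ and $H_{m,k}(t) = \frac{1}{2^m(m+2k)!}\frac{d^{m+2k}}{dt^{m+2k}}[(t^2-1)^m(t-1)^{2k}]$. Then for all integers $m \geq 0$, $k \geq 0$, the polynomial identity $G_{m,k}(t) = \frac{(m+2k)!}{m!} H_{m,k}(1-2t)$ holds. -/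
/-- `G_{m,k}(t) = ∑_{a=0}^m (-1)^a (m+2k+a)! / ((a!)² (m-a)!) t^a`. -/
noncomputable def Gpoly (m k : ℕ) (t : ℝ) : ℝ :=
  ∑ a ∈ Finset.range (m + 1),
    (-1 : ℝ) ^ a * ((m + 2 * k + a).factorial : ℝ)
      / ((a.factorial : ℝ) ^ 2 * ((m - a).factorial : ℝ)) * t ^ a

open Polynomial Finset

lemma iteratedDeriv_polyEval (n : ℕ) (p : ℝ[X]) :
    iteratedDeriv n (fun s : ℝ => p.eval s) = fun t => (derivative^[n] p).eval t := by
  induction n generalizing p with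
  | zero => simp
  | succ n ih =>
    rw [iteratedDeriv_succ']
    have : deriv (fun s : ℝ => p.eval s) = fun s => (derivative p).eval s := by
      funext s; exact Polynomial.deriv p
    rw [this, ih, Function.iterate_succ_apply]

lemma iterDeriv_sum {ι : Type*} (n : ℕ) (s : Finset ι) (f : ι → ℝ[X]) :
    derivative^[n] (∑ i ∈ s, f i) = ∑ i ∈ s, derivative^[n] (f i) := by
  induction n with
  | zero => simp
  | succ n ih =>
    rw [Function.iterate_succ_apply', ih, derivative_sum]
    simp [Function.iterate_succ_apply']

lemma term_eq (m k a : ℕ) (ha : a ≤ m) (t : ℝ) :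
    (-1 : ℝ) ^ a * ((m + 2 * k + a).factorial : ℝ)
      / ((a.factorial : ℝ) ^ 2 * ((m - a).factorial : ℝ)) * t ^ a
    = ((m + 2 * k).factorial : ℝ) / (m.factorial : ℝ) *
        ((1 / (2 ^ m * ((m + 2 * k).factorial : ℝ))) *
          ((m.choose a : ℝ) * 2 ^ (m - a) *
            (((m + 2 * k + a).descFactorial (m + 2 * k) : ℕ) : ℝ) * (-(2 * t)) ^ a)) := by
  have h1 : ((a.factorial : ℝ)) * (((m + 2 * k + a).descFactorial (m + 2 * k) : ℕ) : ℝ)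
      = ((m + 2 * k + a).factorial : ℝ) := by
    have := Nat.factorial_mul_descFactorial (n := m + 2 * k + a) (k := m + 2 * k) (by omega)
    have h' : m + 2 * k + a - (m + 2 * k) = a := by omega
    rw [h'] at this
    exact_mod_cast congrArg (Nat.cast : ℕ → ℝ) this
  have h2 : ((m.choose a : ℝ)) * (a.factorial : ℝ) * ((m - a).factorial : ℝ)
      = (m.factorial : ℝ) := by
    exact_mod_cast congrArg (Nat.cast : ℕ → ℝ) (Nat.choose_mul_factorial_mul_factorial ha)
  have h3 : (2 : ℝ) ^ (m - a) * 2 ^ a = 2 ^ m := pow_sub_mul_pow 2 ha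
  have hneg : (-(2 * t)) ^ a = (-1 : ℝ) ^ a * 2 ^ a * t ^ a := by
    rw [neg_pow, mul_pow]; ring
  have hA : (a.factorial : ℝ) ≠ 0 := Nat.cast_ne_zero.2 a.factorial_ne_zero
  have hM' : ((m - a).factorial : ℝ) ≠ 0 := Nat.cast_ne_zero.2 (m - a).factorial_ne_zero
  have hM : (m.factorial : ℝ) ≠ 0 := Nat.cast_ne_zero.2 m.factorial_ne_zero
  have hN : ((m + 2 * k).factorial : ℝ) ≠ 0 := Nat.cast_ne_zero.2 (m + 2 * k).factorial_ne_zero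
  have h2m : (2 : ℝ) ^ m ≠ 0 := by positivity
  rw [hneg]
  field_simp
  rw [← h1, ← h2, ← h3]
  ring

theorem stmt1 (m k : ℕ) (t : ℝ) :
    Gpoly m k t = ((m + 2 * k).factorial : ℝ) / (m.factorial : ℝ) * Hpoly m k (1 - 2 * t) := by
  have hfun : (fun s : ℝ => (s ^ 2 - 1) ^ m * (s - 1) ^ (2 * k))
      = fun s : ℝ => (((X - C 1) ^ (m + 2 * k) * (X + C 1) ^ m : ℝ[X])).eval s := by
    funext s
    simp only [eval_mul, eval_pow, eval_sub, eval_add, eval_X, eval_C]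
    rw [show s ^ 2 - 1 = (s - 1) * (s + 1) by ring, mul_pow, pow_add]
    ring
  have hp : ((X - C 1) ^ (m + 2 * k) * (X + C 1) ^ m : ℝ[X])
      = ∑ i ∈ range (m + 1),
          C ((m.choose i : ℝ) * 2 ^ (m - i)) * (X - C 1) ^ (m + 2 * k + i) := by
    have h2 : (X + C 1 : ℝ[X]) = (X - C 1) + C 2 := by
      rw [show (2 : ℝ) = 1 + 1 by norm_num, C_add]; ring
    rw [h2, add_pow, Finset.mul_sum]
    refine Finset.sum_congr rfl fun i _ => ?_
    rw [C_mul, C_pow, C_eq_natCast, pow_add]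
    ring
  have hH : Hpoly m k (1 - 2 * t)
      = (1 / (2 ^ m * ((m + 2 * k).factorial : ℝ))) *
          ∑ i ∈ range (m + 1),
            (m.choose i : ℝ) * 2 ^ (m - i) *
              (((m + 2 * k + i).descFactorial (m + 2 * k) : ℕ) : ℝ) * (-(2 * t)) ^ i := by
    rw [Hpoly, hfun, iteratedDeriv_polyEval, hp, iterDeriv_sum]
    congr 1
    simp only [eval_finset_sum]
    refine Finset.sum_congr rfl fun i _ => ?_
    rw [iterate_derivative_C_mul, iterate_derivative_X_sub_pow,
      show m + 2 * k + i - (m + 2 * k) = i by omega]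
    simp only [nsmul_eq_mul, eval_mul, eval_pow, eval_sub, eval_X, eval_C, eval_natCast]
    ring
  rw [Gpoly, hH, Finset.mul_sum, Finset.mul_sum]
  exact Finset.sum_congr rfl fun a ha => term_eq m k a (by simpa using Nat.lt_succ_iff.mp (Finset.mem_range.mp ha)) t
end

section
/- The polynomials $G_{m,k}(t) = \sum_{a=0}^m (-1)^a \frac{(m+2k+a)!}{(a!)^2(m-a)!} t^a$ satisfy, for all $m \geq 1$, the three-term recurrence: $(m+1)^2(m+k) G_{m+1,k}(t) = (2m+2k+1)[m^2 + m + 2km + k - (m+k)(2m+2k+2)t] G_{m,k}(t) - (m+k+1)(m+2k)^2 G_{m-1,k}(t)$. -/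
noncomputable def Fc (m k a : ℕ) : ℝ :=
  (-1 : ℝ) ^ a * ((m + 2 * k + a).factorial : ℝ)
    / ((a.factorial : ℝ) ^ 2 * ((m - a).factorial : ℝ))

lemma Gpoly_eq_F (m k : ℕ) (t : ℝ) :
    Gpoly m k t = ∑ a ∈ Finset.range (m + 1), Fc m k a * t ^ a := rfl

lemma F_eval (a b k : ℕ) :
    Fc (a + b) k a = (-1 : ℝ) ^ a * (((2 * a + b + 2 * k).factorial : ℝ))
      / ((a.factorial : ℝ) ^ 2 * (b.factorial : ℝ)) := by
  unfold Fc
  rw [Nat.add_sub_cancel_left, show a + b + 2 * k + a = 2 * a + b + 2 * k from by omega]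

lemma f1 (n : ℕ) : (((n + 1).factorial : ℝ)) = ((n : ℝ) + 1) * (n.factorial : ℝ) := by
  rw [Nat.factorial_succ]; push_cast; ring

lemma f2 (n : ℕ) : (((n + 2).factorial : ℝ))
    = ((n : ℝ) + 2) * (((n : ℝ) + 1) * (n.factorial : ℝ)) := by
  rw [show n + 2 = (n + 1) + 1 from rfl, Nat.factorial_succ, Nat.factorial_succ]
  push_cast; ring

lemma fne (n : ℕ) : ((n.factorial : ℝ)) ≠ 0 := Nat.cast_ne_zero.mpr n.factorial_ne_zero

theorem stmt2 (m k : ℕ) (hm : 1 ≤ m) (t : ℝ) :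
    ((m : ℝ) + 1) ^ 2 * ((m : ℝ) + k) * Gpoly (m + 1) k t
      = (2 * (m : ℝ) + 2 * k + 1) *
          (((m : ℝ) ^ 2 + m + 2 * k * m + k) - ((m : ℝ) + k) * (2 * m + 2 * k + 2) * t) *
          Gpoly m k t
        - ((m : ℝ) + k + 1) * ((m : ℝ) + 2 * k) ^ 2 * Gpoly (m - 1) k t := by
  have key : ∀ a, a ≤ m + 1 →
      ((m : ℝ) + 1) ^ 2 * ((m : ℝ) + k) * Fc (m + 1) k a
        = (2 * (m : ℝ) + 2 * k + 1) * ((m : ℝ) ^ 2 + m + 2 * k * m + k) *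
            (if a ≤ m then Fc m k a else 0)
          - (2 * (m : ℝ) + 2 * k + 1) * ((m : ℝ) + k) * (2 * (m : ℝ) + 2 * k + 2) *
            (if 1 ≤ a then Fc m k (a - 1) else 0)
          - ((m : ℝ) + k + 1) * ((m : ℝ) + 2 * k) ^ 2 *
            (if a ≤ m - 1 then Fc (m - 1) k a else 0) := by
    intro a ha
    rcases Nat.eq_zero_or_pos a with rfl | ha1
    · -- a = 0
      obtain ⟨b, rfl⟩ : ∃ b, m = b + 1 := ⟨m - 1, by omega⟩
      rw [if_pos (by omega), if_neg (by omega), if_pos (by omega)]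
      have E1 : Fc (b + 1 + 1) k 0
          = (-1 : ℝ) ^ 0 * (((b + 2 * k + 2).factorial : ℝ))
            / (((0).factorial : ℝ) ^ 2 * ((b + 2).factorial : ℝ)) := by
        rw [show b + 1 + 1 = 0 + (b + 2) from by omega, F_eval,
          show 2 * 0 + (b + 2) + 2 * k = b + 2 * k + 2 from by omega]
        norm_num
      have E2 : Fc (b + 1) k 0
          = (-1 : ℝ) ^ 0 * (((b + 2 * k + 1).factorial : ℝ))
            / (((0).factorial : ℝ) ^ 2 * ((b + 1).factorial : ℝ)) := by
        rw [show b + 1 = 0 + (b + 1) from by omega, F_eval,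
          show 2 * 0 + (b + 1) + 2 * k = b + 2 * k + 1 from by omega]
        norm_num
      have E3 : Fc (b + 1 - 1) k 0
          = (-1 : ℝ) ^ 0 * (((b + 2 * k).factorial : ℝ))
            / (((0).factorial : ℝ) ^ 2 * ((b).factorial : ℝ)) := by
        rw [show b + 1 - 1 = 0 + b from by omega, F_eval,
          show 2 * 0 + b + 2 * k = b + 2 * k from by omega]
      rw [E1, E2, E3, show b + 2 * k + 2 = (b + 2 * k) + 2 from by omega,
        show b + 2 * k + 1 = (b + 2 * k) + 1 from by omega,
        f2 (b + 2 * k), f1 (b + 2 * k), f2 b, f1 b, Nat.factorial_zero]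
      have h1 := fne (b + 2 * k)
      have h2 := fne b
      have h3 : ((b : ℝ) + 1) ≠ 0 := by positivity
      have h4 : ((b : ℝ) + 2) ≠ 0 := by positivity
      push_cast
      field_simp
      ring
    · have hsplit : a ≤ m - 1 ∨ a = m ∨ a = m + 1 := by omega
      rcases hsplit with h | rfl | rfl
      · -- 1 ≤ a ≤ m - 1
        obtain ⟨c, rfl⟩ : ∃ c, a = c + 1 := ⟨a - 1, by omega⟩
        obtain ⟨b, rfl⟩ : ∃ b, m = c + b + 2 := ⟨m - c - 2, by omega⟩
        rw [if_pos (by omega), if_pos (by omega), if_pos (by omega),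
          show c + 1 - 1 = c from by omega]
        have E1 : Fc (c + b + 2 + 1) k (c + 1)
            = (-1 : ℝ) ^ (c + 1) * (((2 * c + b + 2 * k + 2 + 2).factorial : ℝ))
              / (((c + 1).factorial : ℝ) ^ 2 * ((b + 2).factorial : ℝ)) := by
          rw [show c + b + 2 + 1 = (c + 1) + (b + 2) from by omega, F_eval,
            show 2 * (c + 1) + (b + 2) + 2 * k = 2 * c + b + 2 * k + 2 + 2 from by omega]
        have E2 : Fc (c + b + 2) k (c + 1)
            = (-1 : ℝ) ^ (c + 1) * (((2 * c + b + 2 * k + 2 + 1).factorial : ℝ))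
              / (((c + 1).factorial : ℝ) ^ 2 * ((b + 1).factorial : ℝ)) := by
          rw [show c + b + 2 = (c + 1) + (b + 1) from by omega, F_eval,
            show 2 * (c + 1) + (b + 1) + 2 * k = 2 * c + b + 2 * k + 2 + 1 from by omega]
        have E3 : Fc (c + b + 2) k c
            = (-1 : ℝ) ^ c * (((2 * c + b + 2 * k + 2).factorial : ℝ))
              / (((c).factorial : ℝ) ^ 2 * ((b + 2).factorial : ℝ)) := by
          rw [show c + b + 2 = c + (b + 2) from by omega, F_eval,
            show 2 * c + (b + 2) + 2 * k = 2 * c + b + 2 * k + 2 from by omega]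
        have E4 : Fc (c + b + 2 - 1) k (c + 1)
            = (-1 : ℝ) ^ (c + 1) * (((2 * c + b + 2 * k + 2).factorial : ℝ))
              / (((c + 1).factorial : ℝ) ^ 2 * ((b).factorial : ℝ)) := by
          rw [show c + b + 2 - 1 = (c + 1) + b from by omega, F_eval,
            show 2 * (c + 1) + b + 2 * k = 2 * c + b + 2 * k + 2 from by omega]
        rw [E1, E2, E3, E4, f2 (2 * c + b + 2 * k + 2), f1 (2 * c + b + 2 * k + 2),
          f2 b, f1 b, f1 c]
        have h1 := fne (2 * c + b + 2 * k + 2)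
        have h2 := fne b
        have h3 := fne c
        have h4 : ((b : ℝ) + 1) ≠ 0 := by positivity
        have h5 : ((b : ℝ) + 2) ≠ 0 := by positivity
        have h6 : ((c : ℝ) + 1) ≠ 0 := by positivity
        push_cast
        field_simp
        ring
      · -- a = m
        obtain ⟨c, rfl⟩ : ∃ c, a = c + 1 := ⟨a - 1, by omega⟩
        rw [if_pos (by omega), if_pos (by omega), if_neg (by omega),
          show c + 1 - 1 = c from by omega]
        have E1 : Fc (c + 1 + 1) k (c + 1)
            = (-1 : ℝ) ^ (c + 1) * (((2 * c + 2 * k + 1 + 2).factorial : ℝ))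
              / (((c + 1).factorial : ℝ) ^ 2 * ((1).factorial : ℝ)) := by
          rw [show c + 1 + 1 = (c + 1) + 1 from by omega, F_eval,
            show 2 * (c + 1) + 1 + 2 * k = 2 * c + 2 * k + 1 + 2 from by omega]
        have E2 : Fc (c + 1) k (c + 1)
            = (-1 : ℝ) ^ (c + 1) * (((2 * c + 2 * k + 1 + 1).factorial : ℝ))
              / (((c + 1).factorial : ℝ) ^ 2 * ((0).factorial : ℝ)) := by
          rw [show c + 1 = (c + 1) + 0 from by omega, F_eval,
            show 2 * (c + 1) + 0 + 2 * k = 2 * c + 2 * k + 1 + 1 from by omega]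
        have E3 : Fc (c + 1) k c
            = (-1 : ℝ) ^ c * (((2 * c + 2 * k + 1).factorial : ℝ))
              / (((c).factorial : ℝ) ^ 2 * ((1).factorial : ℝ)) := by
          rw [show c + 1 = c + 1 from rfl, F_eval,
            show 2 * c + 1 + 2 * k = 2 * c + 2 * k + 1 from by omega]
        rw [E1, E2, E3, f2 (2 * c + 2 * k + 1), f1 (2 * c + 2 * k + 1), f1 c,
          Nat.factorial_one, Nat.factorial_zero]
        have h1 := fne (2 * c + 2 * k + 1)
        have h3 := fne c
        have h6 : ((c : ℝ) + 1) ≠ 0 := by positivity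
        push_cast
        field_simp
        ring
      · -- a = m + 1
        obtain ⟨c, rfl⟩ : ∃ c, m = c + 1 := ⟨m - 1, by omega⟩
        rw [if_neg (by omega), if_pos (by omega), if_neg (by omega),
          show c + 1 + 1 - 1 = c + 1 from by omega]
        have E1 : Fc (c + 1 + 1) k (c + 1 + 1)
            = (-1 : ℝ) ^ (c + 1 + 1) * (((2 * c + 2 * k + 2 + 2).factorial : ℝ))
              / (((c + 2).factorial : ℝ) ^ 2 * ((0).factorial : ℝ)) := by
          rw [show c + 1 + 1 = (c + 2) + 0 from by omega, F_eval,
            show 2 * (c + 2) + 0 + 2 * k = 2 * c + 2 * k + 2 + 2 from by omega,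
            show c + 2 = c + 1 + 1 from by omega]
        have E2 : Fc (c + 1) k (c + 1)
            = (-1 : ℝ) ^ (c + 1) * (((2 * c + 2 * k + 2).factorial : ℝ))
              / (((c + 1).factorial : ℝ) ^ 2 * ((0).factorial : ℝ)) := by
          rw [show c + 1 = (c + 1) + 0 from by omega, F_eval,
            show 2 * (c + 1) + 0 + 2 * k = 2 * c + 2 * k + 2 from by omega]
        rw [E1, E2, f2 (2 * c + 2 * k + 2),
          show c + 2 = (c : ℕ) + 2 from rfl, f2 c, f1 c, Nat.factorial_zero]
        have h1 := fne (2 * c + 2 * k + 2)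
        have h3 := fne c
        have h6 : ((c : ℝ) + 1) ≠ 0 := by positivity
        have h7 : ((c : ℝ) + 2) ≠ 0 := by positivity
        push_cast
        field_simp
        ring
  -- sum manipulation
  rw [Gpoly_eq_F, Gpoly_eq_F, Gpoly_eq_F, show m - 1 + 1 = m from by omega]
  have S1 : (∑ a ∈ Finset.range (m + 1 + 1), (if a ≤ m then Fc m k a else 0) * t ^ a)
      = ∑ a ∈ Finset.range (m + 1), Fc m k a * t ^ a := by
    rw [Finset.sum_range_succ, if_neg (by omega), zero_mul, add_zero]
    exact Finset.sum_congr rfl fun a ha => by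
      rw [if_pos (Nat.lt_succ_iff.mp (Finset.mem_range.mp ha))]
  have S2 : (∑ a ∈ Finset.range (m + 1 + 1), (if a ≤ m - 1 then Fc (m - 1) k a else 0) * t ^ a)
      = ∑ a ∈ Finset.range m, Fc (m - 1) k a * t ^ a := by
    rw [Finset.sum_range_succ, Finset.sum_range_succ, if_neg (by omega), if_neg (by omega),
      zero_mul, add_zero, zero_mul, add_zero]
    exact Finset.sum_congr rfl fun a ha => by
      rw [if_pos (by have := Finset.mem_range.mp ha; omega)]
  have S3 : (∑ a ∈ Finset.range (m + 1 + 1), (if 1 ≤ a then Fc m k (a - 1) else 0) * t ^ a)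
      = t * (∑ a ∈ Finset.range (m + 1), Fc m k a * t ^ a) := by
    rw [Finset.sum_range_succ', if_neg (by omega), zero_mul, add_zero, Finset.mul_sum]
    exact Finset.sum_congr rfl fun a ha => by
      rw [if_pos (by omega), show a + 1 - 1 = a from by omega, pow_succ]; ring
  have expand : ∀ x y : ℝ,
      (2 * (m : ℝ) + 2 * k + 1) *
          (((m : ℝ) ^ 2 + m + 2 * k * m + k) - ((m : ℝ) + k) * (2 * m + 2 * k + 2) * t) * x
        - ((m : ℝ) + k + 1) * ((m : ℝ) + 2 * k) ^ 2 * y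
      = (2 * (m : ℝ) + 2 * k + 1) * ((m : ℝ) ^ 2 + m + 2 * k * m + k) * x
        - (2 * (m : ℝ) + 2 * k + 1) * ((m : ℝ) + k) * (2 * (m : ℝ) + 2 * k + 2) * (t * x)
        - ((m : ℝ) + k + 1) * ((m : ℝ) + 2 * k) ^ 2 * y := fun x y => by ring
  rw [expand, ← S3, ← S1, ← S2, Finset.mul_sum, Finset.mul_sum, Finset.mul_sum, Finset.mul_sum,
    ← Finset.sum_sub_distrib, ← Finset.sum_sub_distrib]
  refine Finset.sum_congr rfl fun a ha => ?_
  have haa : a ≤ m + 1 := by have := Finset.mem_range.mp ha; omega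
  linear_combination (key a haa) * t ^ a
end

section
/- With $H_{m,k}(t) = \frac{1}{2^m(m+2k)!}\frac{d^{m+2k}}{dt^{m+2k}}[(t^2-1)^m(t-1)^{2k}]$ and $P_n^{(0,\beta)}$ the Jacobi polynomial, the identity $H_{m,k}(t) = 2^{2k} \cdot P_{m+2k}^{(0,-2k)}(t) \cdot (1+t)^{-2k}$ holds as an identity of rational functions (equivalently, $(1+t)^{2k} H_{m,k}(t) = 2^{2k} P_{m+2k}^{(0,-2k)}(t)$ as polynomials). -/
/-- The Jacobi polynomial `P_n^{(0,β)}` via the Rodrigues formula. -/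
noncomputable def Pjac (n : ℕ) (β : ℤ) (t : ℝ) : ℝ :=
  ((-1 : ℝ) ^ n / (2 ^ n * (n.factorial : ℝ))) * (1 + t) ^ (-β) *
    iteratedDeriv n (fun s : ℝ => (1 + s) ^ β * (1 - s ^ 2) ^ n) t

lemma one_add_zpow_neg_mul_one_sub_sq_pow {K : Type*} [Field K] (m k : ℕ) {s : K}
    (hs : 1 + s ≠ 0) :
    (1 + s) ^ (-(2 * k : ℤ)) * (1 - s ^ 2) ^ (m + 2 * k) =
      (-1) ^ m * ((s ^ 2 - 1) ^ m * (s - 1) ^ (2 * k)) := by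
  have hfactor : (1 - s ^ 2) ^ (m + 2 * k) =
      (1 + s) ^ (2 * k) * ((-1) ^ m * ((s ^ 2 - 1) ^ m * (s - 1) ^ (2 * k))) := by
    have hm : (1 - s ^ 2) ^ m = (-1) ^ m * (s ^ 2 - 1) ^ m := by
      rw [← mul_pow, neg_one_mul, neg_sub]
    have hk : (1 - s ^ 2) ^ (2 * k) = (1 + s) ^ (2 * k) * (s - 1) ^ (2 * k) := by
      rw [← mul_pow, show 1 - s ^ 2 = -((1 + s) * (s - 1)) by ring, (even_two_mul k).neg_pow]
    rw [pow_add, hm, hk]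
    ring
  rw [hfactor, zpow_neg, ← mul_assoc, show (2 * k : ℤ) = ((2 * k : ℕ) : ℤ) by push_cast; ring,
    zpow_natCast, inv_mul_cancel₀ (pow_ne_zero _ hs), one_mul]

lemma iteratedDeriv_jacobiRodrigues_eq (m k : ℕ) {t : ℝ} (ht : t ≠ -1) :
    iteratedDeriv (m + 2 * k)
        (fun s : ℝ => (1 + s) ^ (-(2 * k : ℤ)) * (1 - s ^ 2) ^ (m + 2 * k)) t =
      (-1) ^ m * iteratedDeriv (m + 2 * k)
        (fun s : ℝ => (s ^ 2 - 1) ^ m * (s - 1) ^ (2 * k)) t := by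
  have hnear : (fun s : ℝ => (1 + s) ^ (-(2 * k : ℤ)) * (1 - s ^ 2) ^ (m + 2 * k)) =ᶠ[nhds t]
      fun s => (-1) ^ m * ((s ^ 2 - 1) ^ m * (s - 1) ^ (2 * k)) := by
    filter_upwards [isOpen_ne.mem_nhds ht] with s hs
    exact one_add_zpow_neg_mul_one_sub_sq_pow m k fun h => hs (by linarith)
  rw [hnear.iteratedDeriv_eq, iteratedDeriv_const_mul_field]

/-- `(1+t)^{2k} H_{m,k}(t) = 2^{2k} P_{m+2k}^{(0,-2k)}(t)` (as rational functions,
i.e. away from `t = -1`). -/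
theorem stmt5 (m k : ℕ) (t : ℝ) (ht : t ≠ -1) :
    (1 + t) ^ (2 * k) * Hpoly m k t = 2 ^ (2 * k) * Pjac (m + 2 * k) (-(2 * k : ℤ)) t := by
  rw [Hpoly, Pjac, iteratedDeriv_jacobiRodrigues_eq m k ht, neg_neg,
    show (2 * k : ℤ) = ((2 * k : ℕ) : ℤ) by push_cast; ring, zpow_natCast]
  have hsign : (-1 : ℝ) ^ (m + 2 * k) * (-1) ^ m = 1 := by
    rw [← pow_add, show m + 2 * k + m = 2 * (m + k) by ring, pow_mul, neg_one_sq, one_pow]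
  set D := iteratedDeriv (m + 2 * k) (fun s : ℝ => (s ^ 2 - 1) ^ m * (s - 1) ^ (2 * k)) t
  rw [pow_add (2 : ℝ) m]
  field_simp
  linear_combination -(1 + t) ^ (2 * k) * D * hsign
end

section
/- Let $T$ be a finite free $\mathbb{Z}_p$-module with continuous action of a profinite group $G$, let $V = T \otimes \mathbb{Q}_p$, and let $G_1 \supset G_2 \supset \cdots$ be a decreasing sequence of closed subgroups with intersection $G_\infty$. Suppose $H^0(G_\infty, V) = 0$. Then the orders $\#H^1(G_j, T)_{tors}$ of the torsion subgroups of $H^1(G_j, T)$ are bounded as $j \to \infty$. Equivalently: there is no sequence $t_i \in T \setminus pT$ with $\sigma t_i - t_i \in p^{a(i)} T$ for all $\sigma \in G_\infty$ and $a(i) \to \infty$. -/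
/-!
Transport `T` to `ι → ℤ_[p]` along a basis. The vectors `tᵢ ∉ pT` then lie in the closed, hence
compact, set `{v | 1 ≤ ‖v‖}`, and `‖σ tᵢ - tᵢ‖ ≤ p^{-a(i)} → 0` uniformly in `σ`. The limit of a
convergent subsequence is therefore a nonzero `G`-invariant vector.
-/

open Filter Topology

theorem IsCompact.exists_fixedPoint_mem_of_tendsto_dist {X α : Type*} [MetricSpace X]
    {s : Set X} (hs : IsCompact s) (f : α → X → X) (hf : ∀ σ, Continuous (f σ))
    (u : ℕ → X) (hus : ∀ i, u i ∈ s)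
    (hu : ∀ σ, Tendsto (fun i ↦ dist (f σ (u i)) (u i)) atTop (𝓝 0)) :
    ∃ x ∈ s, ∀ σ, f σ x = x := by
  obtain ⟨x, hxs, φ, hφ, hlim⟩ := hs.tendsto_subseq hus
  refine ⟨x, hxs, fun σ ↦ dist_eq_zero.mp (tendsto_nhds_unique ?_ ((hu σ).comp hφ.tendsto_atTop))⟩
  exact (((hf σ).tendsto x).comp hlim).dist hlim

namespace PadicInt

variable {p : ℕ} [Fact p.Prime] {ι : Type*} [Fintype ι]

theorem one_le_norm_of_not_dvd {v : ι → ℤ_[p]} (hv : ¬ ∃ w, v = (p : ℤ_[p]) • w) : 1 ≤ ‖v‖ := by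
  contrapose! hv
  choose w hw using fun j ↦ (norm_lt_one_iff_dvd (v j)).mp ((norm_le_pi_norm v j).trans_lt hv)
  exact ⟨w, funext hw⟩

theorem norm_pow_smul_le (n : ℕ) (v : ι → ℤ_[p]) : ‖(p : ℤ_[p]) ^ n • v‖ ≤ (p : ℝ)⁻¹ ^ n :=
  calc ‖(p : ℤ_[p]) ^ n • v‖ ≤ ‖(p : ℤ_[p]) ^ n‖ * ‖v‖ := norm_smul_le _ _
    _ ≤ ‖(p : ℤ_[p]) ^ n‖ * 1 := by
      gcongr
      exact (pi_norm_le_iff_of_nonneg zero_le_one).mpr fun j ↦ norm_le_one _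
    _ = (p : ℝ)⁻¹ ^ n := by rw [mul_one, norm_p_pow, zpow_neg, zpow_natCast, inv_pow]

end PadicInt

/-- Bounded denominators: let `T` be a finite free `ℤ_p`-module with an action of a group
`G∞` (the intersection of the decreasing sequence of Galois groups), and suppose
`H⁰(G∞, V) = 0` for `V = T ⊗ ℚ_p` (equivalently, `T` has no nonzero `G∞`-invariants,
as `T` is torsion free). Then there is no sequence `tᵢ ∈ T \ pT` with
`σ tᵢ - tᵢ ∈ p^{a(i)} T` for all `σ ∈ G∞` and `a(i) → ∞`; equivalently, the torsion
subgroups of `H¹(G_j, T)` have bounded order. -/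
theorem stmt15 (p : ℕ) [Fact p.Prime]
    (T : Type*) [AddCommGroup T] [Module ℤ_[p] T]
    [Module.Free ℤ_[p] T] [Module.Finite ℤ_[p] T]
    (G : Type*) [Group G]
    (ρ : Representation ℤ_[p] G T)
    (hinv : ∀ t : T, (∀ σ : G, ρ σ t = t) → t = 0) :
    ¬ ∃ (t : ℕ → T) (a : ℕ → ℕ),
        (∀ i, ¬ ∃ s : T, t i = (p : ℤ_[p]) • s) ∧
        (∀ (i : ℕ) (σ : G), ∃ s : T, ρ σ (t i) - t i = ((p : ℤ_[p]) ^ a i) • s) ∧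
        Filter.Tendsto a Filter.atTop Filter.atTop := by
  rintro ⟨t, a, hnp, hdvd, ha⟩
  let e := (Module.Free.chooseBasis ℤ_[p] T).equivFun
  have hnorm (i : ℕ) : 1 ≤ ‖e (t i)‖ := PadicInt.one_le_norm_of_not_dvd fun ⟨w, hw⟩ ↦
    hnp i ⟨e.symm w, by rw [← map_smul, ← hw, e.symm_apply_apply]⟩
  have hdist (σ : G) (i : ℕ) : dist (e.conj (ρ σ) (e (t i))) (e (t i)) ≤ (p : ℝ)⁻¹ ^ a i := by
    obtain ⟨s, hs⟩ := hdvd i σ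
    rw [dist_eq_norm, LinearEquiv.conj_apply_apply, e.symm_apply_apply, ← map_sub, hs, map_smul]
    exact PadicInt.norm_pow_smul_le _ _
  have hgeom : Tendsto (fun i ↦ (p : ℝ)⁻¹ ^ a i) atTop (𝓝 0) :=
    (tendsto_pow_atTop_nhds_zero_of_lt_one (by positivity)
      (inv_lt_one_of_one_lt₀ (by exact_mod_cast (Fact.out : p.Prime).one_lt))).comp ha
  obtain ⟨x, hx, hfix⟩ := (isClosed_le continuous_const continuous_norm).isCompact
    |>.exists_fixedPoint_mem_of_tendsto_dist (fun σ ↦ e.conj (ρ σ))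
    (fun σ ↦ LinearMap.continuous_on_pi _) (fun i ↦ e (t i)) hnorm
    fun σ ↦ squeeze_zero (fun _ ↦ dist_nonneg) (hdist σ) hgeom
  have hx0 : e.symm x = 0 := hinv _ fun σ ↦ by
    simpa [LinearEquiv.conj_apply_apply] using congrArg e.symm (hfix σ)
  norm_num [e.symm.map_eq_zero_iff.mp hx0] at hx
end

section
/- Let $K$ be an imaginary quadratic field, $\mathcal{A}$ an ideal class, $\mathcal{D}_1, \mathcal{D}_2$ the ideals of norms $|D_1|, |D_2|$ for a factorization $D = D_1 D_2$ of the discriminant, and $\chi$ an unramified Hecke character of infinity type $(\ell, 0)$. Then for every integer $j \geq 1$: $r_{\mathcal{A}\mathcal{D}_1^{-1},\chi}(j) = \chi(\mathcal{D}_2)^{-1} \cdot r_{\mathcal{A},\chi}(j|D_2|)$, where $r_{\mathcal{B},\chi}(t) = \sum_{\mathfrak{b} \in \mathcal{B},\, \mathfrak{b} \subset \mathcal{O}_K,\, N\mathfrak{b} = t} \chi(\mathfrak{b})$. -/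
/-!
Multiplication by `𝒟₂` maps the integral ideals of norm `j` in the class `𝒜𝒟₁⁻¹` bijectively
onto those of norm `j|D₂|` in `𝒜`, and `χ(𝔟𝒟₂) = χ(𝔟)χ(𝒟₂)`.

The image lies in `𝒜` because `𝒟₁𝒟₂ = (√D)` is principal: both ideals square to `(D)`, and
`√D = 2ω - tr ω` lies in `𝓞 K` for any integral basis `(1, ω)`.

The map is onto because every `p ∣ D` ramifies, so in a quadratic field it has a single prime
above it; for such primes, divisibility of norms implies divisibility of ideals, so
`|D₂| ∣ N𝔟` forces `𝒟₂ ∣ 𝔟`.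
-/

open NumberField Ideal Module
open scoped nonZeroDivisors

/-- `r_{𝒜,χ}(t) = ∑ χ(𝔞)` over integral ideals `𝔞` in the ideal class `A` of norm `t`. -/
noncomputable def heckeSum {K : Type*} [Field K] [NumberField K]
    (χ : Ideal (𝓞 K) → ℂ) (A : ClassGroup (𝓞 K)) (t : ℕ) : ℂ :=
  ∑ᶠ I ∈ {I : (Ideal (𝓞 K))⁰ |
      Ideal.absNorm (I : Ideal (𝓞 K)) = t ∧ ClassGroup.mk0 I = A},
    χ (I : Ideal (𝓞 K))

theorem Module.exists_basis_fin_two_zero_eq_one {S : Type*} [CommRing S] [Module.Free ℤ S]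
    [Module.Finite ℤ S] (h : finrank ℤ S = 2) : ∃ b : Basis (Fin 2) ℤ S, b 0 = 1 := by
  let e : Basis (Fin 2) ℤ S := (Module.finBasis ℤ S).reindex (finCongr h)
  have h1 : e.repr 1 0 • e 0 + e.repr 1 1 • e 1 = 1 := by
    simpa [Fin.sum_univ_two] using e.sum_repr 1
  -- A common divisor `d` of the coordinates of `1` satisfies `d ^ 2 ∣ N(1) = 1`.
  obtain ⟨u, v, huv⟩ : IsCoprime (e.repr 1 0) (e.repr 1 1) := by
    refine Int.isCoprime_iff_gcd_eq_one.mpr (Int.gcd_eq_one_iff.mpr fun d ⟨a, ha⟩ ⟨b, hb⟩ ↦ ?_)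
    have hd : (d : S) * (a • e 0 + b • e 1) = 1 := by
      rw [← h1, ha, hb]; simp only [zsmul_eq_mul]; push_cast; ring
    have := congrArg (Algebra.norm ℤ) hd
    rw [map_mul, MonoidHom.map_one, ← map_intCast (algebraMap ℤ S) d, Algebra.norm_algebraMap, h,
      Int.cast_id] at this
    exact Dvd.intro (d * Algebra.norm ℤ (a • e 0 + b • e 1)) (by linear_combination this)
  let ω : S := (-v) • e 0 + u • e 1
  have hdet : IsUnit (e.det ![1, ω]) := by
    rw [e.det_apply, Matrix.det_fin_two]
    convert isUnit_one
    simp only [Basis.toMatrix_apply, ω, Matrix.cons_val_zero, Matrix.cons_val_one, map_add,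
      map_smul, e.repr_self, Finsupp.add_apply, Finsupp.smul_apply, Finsupp.single_apply]
    norm_num
    linear_combination huv
  obtain ⟨hli, hspan⟩ := (e.is_basis_iff_det).mpr hdet
  exact ⟨Basis.mk hli hspan.ge, by simp⟩

theorem Algebra.algebraMap_discr_eq_sq_of_basis_fin_two {R S : Type*} [CommRing R] [CommRing S]
    [Algebra R S] (b : Basis (Fin 2) R S) (hb : b 0 = 1) :
    algebraMap R S (Algebra.discr R b) =
      (2 * b 1 - algebraMap R S (Algebra.trace R S (b 1))) ^ 2 := by
  have htr (x : S) : Algebra.trace R S x = b.repr (x * b 0) 0 + b.repr (x * b 1) 1 := by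
    rw [Algebra.trace_eq_matrix_trace b, Matrix.trace_fin_two,
      Algebra.leftMulMatrix_eq_repr_mul, Algebra.leftMulMatrix_eq_repr_mul]
  set n := b.repr (b 1 * b 1) 0
  set t := b.repr (b 1 * b 1) 1
  have hsq : b 1 * b 1 = n • 1 + t • b 1 := by
    have := b.sum_repr (b 1 * b 1)
    rwa [Fin.sum_univ_two, hb, eq_comm] at this
  have htr1 : Algebra.trace R S 1 = 2 := by
    rw [htr, one_mul, one_mul, b.repr_self, b.repr_self]; simp [one_add_one_eq_two]
  have htrω : Algebra.trace R S (b 1) = t := by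
    rw [htr, hb, mul_one, b.repr_self]; simp [t]
  have htrω2 : Algebra.trace R S (b 1 * b 1) = 2 * n + t * t := by
    rw [hsq, map_add, map_smul, map_smul, htr1, htrω, smul_eq_mul, smul_eq_mul]; ring
  rw [Algebra.discr_def, Matrix.det_fin_two]
  simp only [Algebra.traceMatrix_apply, Algebra.traceForm_apply, hb, one_mul, mul_one, htr1, htrω,
    htrω2]
  rw [Algebra.smul_def, Algebra.smul_def, mul_one] at hsq
  simp only [map_sub, map_mul, map_add, map_ofNat]
  linear_combination (-4 : S) * hsq

theorem NumberField.exists_sq_eq_discr {K : Type*} [Field K] [NumberField K]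
    (h2 : finrank ℚ K = 2) : ∃ δ : 𝓞 K, δ ^ 2 = discr K := by
  obtain ⟨b, hb⟩ := exists_basis_fin_two_zero_eq_one (S := 𝓞 K) (by rw [RingOfIntegers.rank, h2])
  refine ⟨_, (Algebra.algebraMap_discr_eq_sq_of_basis_fin_two b hb).symm.trans ?_⟩
  rw [← discr_eq_discr K b, eq_intCast]

theorem NumberField.primesOver_subsingleton_of_dvd_discr {K : Type*} [Field K] [NumberField K]
    (h2 : finrank ℚ K = 2) {p : ℤ} (hp : Prime p) (hpD : p ∣ discr K) :
    ((span {p}).primesOver (𝓞 K)).Subsingleton := by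
  have : (span {p}).IsPrime := (span_singleton_prime hp.ne_zero).mpr hp
  obtain ⟨P, hP, hpP, hram⟩ : ∃ P : Ideal (𝓞 K), ∃ _ : P.IsPrime, (p : 𝓞 K) ∈ P ∧
      ¬ Algebra.IsUnramifiedAt ℤ P := by
    simpa using mt (not_dvd_discr_iff_forall_mem K (𝓞 K) hp).mpr (not_not.mpr hpD)
  have hPover : P ∈ (span {p}).primesOver (𝓞 K) :=
    ⟨hP, (liesOver_span_iff hP.ne_top hp).mpr hpP⟩
  have he : 2 ≤ P.ramificationIdx ℤ := by
    have := P.ramificationIdx_pos ℤ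
    have := ramificationIdx_eq_one_iff.not.mpr hram
    omega
  have : Fintype ((span {p}).primesOver (𝓞 K)) :=
    (Algebra.QuasiFinite.finite_primesOver _).fintype
  have hsum := sum_ramification_inertia_eq_finrank (span {p}) (𝓞 K)
  rw [RingOfIntegers.rank, h2] at hsum
  -- `P` alone contributes at least `2` to `∑ e f = [K : ℚ] = 2`.
  suffices ∀ Q ∈ (span {p}).primesOver (𝓞 K), Q = P from
    fun Q hQ R hR ↦ (this Q hQ).trans (this R hR).symm
  intro Q hQ
  by_contra hQP
  have := hQ.1
  have hle := Finset.sum_le_sum_of_subset (f := fun R : (span {p}).primesOver (𝓞 K) ↦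
    R.1.ramificationIdx ℤ * R.1.inertiaDeg ℤ)
    (Finset.subset_univ ({⟨P, hPover⟩, ⟨Q, hQ⟩} : Finset ((span {p}).primesOver (𝓞 K))))
  rw [Finset.sum_pair (by simpa [Subtype.ext_iff] using Ne.symm hQP), hsum] at hle
  have := Nat.mul_pos (Q.ramificationIdx_pos ℤ) (Q.inertiaDeg_pos ℤ)
  have := P.inertiaDeg_pos ℤ
  nlinarith

namespace Ideal

variable {S : Type*} [CommRing S] [IsDedekindDomain S] [Module.Free ℤ S] [Module.Finite ℤ S]

theorem dvd_of_mem_primesOver_of_dvd_absNorm {P J : Ideal S} {ℓ : ℤ} (hℓ : Prime ℓ)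
    (hP : P ∈ (span {ℓ}).primesOver S) (huniq : ((span {ℓ}).primesOver S).Subsingleton)
    (hJ : ℓ ∣ absNorm J) : P ∣ J := by
  obtain ⟨Q, hQ, hQℓ, hQJ⟩ := exists_isMaximal_dvd_of_dvd_absNorm hℓ J hJ
  rwa [huniq hP ⟨hQ.isPrime, ⟨hQℓ.symm⟩⟩]

theorem exists_mem_primesOver_dvd_absNorm {P : Ideal S} (hP : Prime P) :
    ∃ ℓ : ℤ, Prime ℓ ∧ P ∈ (span {ℓ}).primesOver S ∧ ℓ ∣ absNorm P := by
  have := (isPrime_of_prime hP).isMaximal hP.ne_zero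
  obtain ⟨ℓ, n, hn, hℓP, hℓ, hN⟩ := exists_prime_and_absNorm_eq_pow P
  have hℓ' : Prime (ℓ : ℤ) := Nat.prime_iff_prime_int.mp hℓ
  refine ⟨ℓ, hℓ', ⟨inferInstance, (liesOver_span_iff this.ne_top hℓ').mpr (by simpa using hℓP)⟩, ?_⟩
  rw [hN]
  exact_mod_cast dvd_pow_self ℓ hn.ne'

theorem dvd_of_absNorm_dvd_absNorm {E J : Ideal S}
    (hE : ∀ ℓ : ℤ, Prime ℓ → ℓ ∣ absNorm E → ((span {ℓ}).primesOver S).Subsingleton)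
    (h : absNorm E ∣ absNorm J) : E ∣ J := by
  induction E using UniqueFactorizationMonoid.induction_on_prime generalizing J with
  | h₁ =>
    rw [zero_eq_bot, absNorm_bot, zero_dvd_iff, absNorm_eq_zero_iff] at h
    rw [h, ← zero_eq_bot]
  | h₂ E hunit => exact hunit.dvd
  | h₃ E P hE0 hP ih =>
    obtain ⟨ℓ, hℓ, hPℓ, hℓP⟩ := exists_mem_primesOver_dvd_absNorm hP
    have hℓE : ℓ ∣ absNorm (P * E) := hℓP.trans (by simp)
    obtain ⟨J', rfl⟩ : P ∣ J := dvd_of_mem_primesOver_of_dvd_absNorm hℓ hPℓ (hE ℓ hℓ hℓE)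
      (hℓE.trans (by exact_mod_cast h))
    rw [_root_.map_mul, _root_.map_mul] at h
    refine mul_dvd_mul_left P (ih (fun q hq hqE ↦ hE q hq (hqE.trans (by simp))) ?_)
    exact (Nat.mul_dvd_mul_iff_left
      (Nat.pos_of_ne_zero (absNorm_eq_zero_iff.not.mpr hP.ne_zero))).mp h

end Ideal

theorem heckeSum_mul_mk0 {K : Type*} [Field K] [NumberField K] (χ : Ideal (𝓞 K) → ℂ)
    (hmul : ∀ I J : Ideal (𝓞 K), χ (I * J) = χ I * χ J) (E : (Ideal (𝓞 K))⁰)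
    (B : ClassGroup (𝓞 K)) (j : ℕ)
    (hdvd : ∀ J : Ideal (𝓞 K), absNorm J = j * absNorm (E : Ideal (𝓞 K)) →
      (E : Ideal (𝓞 K)) ∣ J) :
    heckeSum χ (B * ClassGroup.mk0 E) (j * absNorm (E : Ideal (𝓞 K))) =
      heckeSum χ B j * χ E := by
  have hE : (E : Ideal (𝓞 K)) ≠ 0 := nonZeroDivisors.coe_ne_zero E
  have hNE : 0 < absNorm (E : Ideal (𝓞 K)) := Nat.pos_of_ne_zero (absNorm_eq_zero_iff.not.mpr hE)
  rw [heckeSum, heckeSum, finsum_mem_mul]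
  symm
  refine finsum_mem_eq_of_bijOn (· * E) ⟨?_, ?_, ?_⟩ fun I _ ↦ by simp [hmul]
  · rintro I ⟨hI, rfl⟩
    simp [hI]
  · exact fun I _ I' _ h ↦ Subtype.ext (mul_right_cancel₀ hE (congrArg Subtype.val h))
  · rintro J ⟨hJ, hJB⟩
    obtain ⟨C, hC⟩ := hdvd J hJ
    have hC0 : C ∈ (Ideal (𝓞 K))⁰ :=
      mem_nonZeroDivisors_of_ne_zero (right_ne_zero_of_mul (hC ▸ nonZeroDivisors.coe_ne_zero J))
    have hJC : J = ⟨C, hC0⟩ * E := Subtype.ext (by simp [hC, mul_comm])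
    refine ⟨⟨C, hC0⟩, ⟨?_, ?_⟩, hJC.symm⟩
    · rw [hC, map_mul, mul_comm] at hJ
      exact Nat.eq_of_mul_eq_mul_right hNE hJ
    · rwa [hJC, map_mul, mul_left_inj] at hJB

theorem stmt18_general (K : Type*) [Field K] [NumberField K]
    (h2 : Module.finrank ℚ K = 2)
    (D D₁ D₂ : ℤ) (hdisc : NumberField.discr K = D)
    (hfac : D = D₁ * D₂)
    (χ : Ideal (𝓞 K) → ℂ)
    (hmul : ∀ I J : Ideal (𝓞 K), χ (I * J) = χ I * χ J)
    (hne : ∀ I : Ideal (𝓞 K), I ≠ 0 → χ I ≠ 0)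
    (𝒟₁ 𝒟₂ : (Ideal (𝓞 K))⁰)
    (hN₂ : Ideal.absNorm (𝒟₂ : Ideal (𝓞 K)) = D₂.natAbs)
    (htor₁ : (ClassGroup.mk0 𝒟₁) ^ 2 = 1)
    (hsq₁ : (𝒟₁ : Ideal (𝓞 K)) * (𝒟₁ : Ideal (𝓞 K)) = Ideal.span {(D₁ : 𝓞 K)})
    (hsq₂ : (𝒟₂ : Ideal (𝓞 K)) * (𝒟₂ : Ideal (𝓞 K)) = Ideal.span {(D₂ : 𝓞 K)})
    (A : ClassGroup (𝓞 K)) (j : ℕ) :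
    heckeSum χ (A * (ClassGroup.mk0 𝒟₁)⁻¹) j
      = (χ (𝒟₂ : Ideal (𝓞 K)))⁻¹ * heckeSum χ A (j * D₂.natAbs) := by
  obtain ⟨δ, hδ⟩ := exists_sq_eq_discr h2
  -- Ideals of a Dedekind domain have unique square roots.
  have hprinc : ((𝒟₁ * 𝒟₂ : (Ideal (𝓞 K))⁰) : Ideal (𝓞 K)) = span {δ} :=
    (pow_left_inj two_ne_zero).mp <| by
      rw [Submonoid.coe_mul, mul_pow, sq, sq, hsq₁, hsq₂, span_singleton_pow, hδ, hdisc, hfac,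
        span_singleton_mul_span_singleton, Int.cast_mul]
  have hcls : A * (ClassGroup.mk0 𝒟₁)⁻¹ * ClassGroup.mk0 𝒟₂ = A := by
    have : ClassGroup.mk0 𝒟₁ * ClassGroup.mk0 𝒟₂ = 1 := by
      rw [← map_mul, ClassGroup.mk0_eq_one_iff]
      exact ⟨δ, hprinc⟩
    rw [eq_inv_of_mul_eq_one_right this, mul_assoc, ← mul_inv, ← sq, htor₁, inv_one, mul_one]
  have hdvd (J : Ideal (𝓞 K)) (hJ : absNorm J = j * absNorm (𝒟₂ : Ideal (𝓞 K))) :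
      (𝒟₂ : Ideal (𝓞 K)) ∣ J := by
    refine dvd_of_absNorm_dvd_absNorm (fun ℓ hℓ hℓ𝒟₂ ↦ ?_) (hJ ▸ dvd_mul_left _ _)
    refine primesOver_subsingleton_of_dvd_discr h2 hℓ (hdisc ▸ hfac ▸ ?_)
    rw [hN₂, Int.dvd_natAbs] at hℓ𝒟₂
    exact hℓ𝒟₂.mul_left D₁
  have hsum := heckeSum_mul_mk0 χ hmul 𝒟₂ (A * (ClassGroup.mk0 𝒟₁)⁻¹) j hdvd
  rw [hcls, hN₂] at hsum
  rw [hsum, eq_inv_mul_iff_mul_eq₀ (hne _ (nonZeroDivisors.coe_ne_zero 𝒟₂)), mul_comm]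

/-- For a factorization `D = D₁D₂` of the discriminant into coprime discriminants, with
`𝒟₁, 𝒟₂` the (2-torsion) ideals of norms `|D₁|, |D₂|`:
`r_{𝒜𝒟₁⁻¹,χ}(j) = χ(𝒟₂)⁻¹ · r_{𝒜,χ}(j·|D₂|)`. -/
theorem stmt18 (K : Type*) [Field K] [NumberField K]
    (h2 : Module.finrank ℚ K = 2)
    (himag : ∀ w : NumberField.InfinitePlace K, w.IsComplex)
    (D D₁ D₂ : ℤ) (hdisc : NumberField.discr K = D) (hD : D < 0)
    (hfac : D = D₁ * D₂) (hcop : IsCoprime D₁ D₂)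
    (ι : K →+* ℂ) (ℓ : ℕ)
    (χ : Ideal (𝓞 K) → ℂ)
    (hmul : ∀ I J : Ideal (𝓞 K), χ (I * J) = χ I * χ J)
    (hne : ∀ I : Ideal (𝓞 K), I ≠ 0 → χ I ≠ 0)
    (hprin : ∀ γ : 𝓞 K, γ ≠ 0 →
      χ (Ideal.span {γ}) = (ι (algebraMap (𝓞 K) K γ)) ^ ℓ)
    (𝒟₁ 𝒟₂ : (Ideal (𝓞 K))⁰)
    (hN₁ : Ideal.absNorm (𝒟₁ : Ideal (𝓞 K)) = D₁.natAbs)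
    (hN₂ : Ideal.absNorm (𝒟₂ : Ideal (𝓞 K)) = D₂.natAbs)
    (htor₁ : (ClassGroup.mk0 𝒟₁) ^ 2 = 1) (htor₂ : (ClassGroup.mk0 𝒟₂) ^ 2 = 1)
    (hsq₁ : (𝒟₁ : Ideal (𝓞 K)) * (𝒟₁ : Ideal (𝓞 K)) = Ideal.span {(D₁ : 𝓞 K)})
    (hsq₂ : (𝒟₂ : Ideal (𝓞 K)) * (𝒟₂ : Ideal (𝓞 K)) = Ideal.span {(D₂ : 𝓞 K)})
    (A : ClassGroup (𝓞 K)) (j : ℕ) (hj : 1 ≤ j) :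
    heckeSum χ (A * (ClassGroup.mk0 𝒟₁)⁻¹) j
      = (χ (𝒟₂ : Ideal (𝓞 K)))⁻¹ * heckeSum χ A (j * D₂.natAbs) :=
  stmt18_general K h2 D D₁ D₂ hdisc hfac χ hmul hne 𝒟₁ 𝒟₂ hN₂ htor₁ hsq₁ hsq₂ A j
end
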